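/- Let G be a group in which (a) whenever [a^p, b^q] = 1 for nonzero integers p, q, we have [a, b] = 1, and (b) whenever [a, b] = 1 and b = c a c⁻¹, we have a = b. If G has a presentation ⟨a, b ∣ a² b⁻¹ a⁻¹ b² a⁻¹ b⁻¹ = 1⟩, then G is abelian. -/

import Mathlib

open FreeGroup
open scoped commutatorElement

/-- The single relator `a² b⁻¹ a⁻¹ b² a⁻¹ b⁻¹` in the free group on two generators,
where `a = FreeGroup.of true` and `b = FreeGroup.of false`. -/
def relStmt1 : Set (FreeGroup Bool) :=
  {FreeGroup.of true ^ 2 * (FreeGroup.of false)⁻¹ * (FreeGroup.of true)⁻¹ *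
    FreeGroup.of false ^ 2 * (FreeGroup.of true)⁻¹ * (FreeGroup.of false)⁻¹}

/-!
With `x = a b⁻¹`, the relator is the conjugate by `x` of the commutator `⁅x, a x a⁻¹⁆`.
So `x` commutes with its conjugate `a x a⁻¹`, and condition (b) forces `x = a x a⁻¹`:
`a` commutes with `a b⁻¹`, hence with `b`. A group generated by two commuting elements
is abelian.
-/

theorem Subgroup.mul_comm_of_closure_eq_top {G : Type*} [Group G] {s : Set G}
    (hs : Subgroup.closure s = ⊤) (hcomm : ∀ x ∈ s, ∀ y ∈ s, x * y = y * x) (x y : G) :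
    x * y = y * x := by
  have := (Subgroup.isMulCommutative_closure hcomm).is_comm
  have hx : x ∈ Subgroup.closure s := hs ▸ Subgroup.mem_top x
  have hy : y ∈ Subgroup.closure s := hs ▸ Subgroup.mem_top y
  exact congrArg Subtype.val (this.comm (⟨x, hx⟩ : Subgroup.closure s) ⟨y, hy⟩)

theorem PresentedGroup.closure_range_comp_of {α G : Type*} [Group G] {rels : Set (FreeGroup α)}
    {f : PresentedGroup rels →* G} (hf : Function.Surjective f) :
    Subgroup.closure (Set.range (f ∘ PresentedGroup.of)) = ⊤ := by
  rw [Set.range_comp, ← MonoidHom.map_closure, PresentedGroup.closure_range_of,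
    ← MonoidHom.range_eq_map, MonoidHom.range_eq_top.2 hf]

theorem relStmt1_map_of {G : Type*} [Group G] (f : PresentedGroup relStmt1 →* G) :
    f (.of true) ^ 2 * (f (.of false))⁻¹ * (f (.of true))⁻¹ * f (.of false) ^ 2 *
      (f (.of true))⁻¹ * (f (.of false))⁻¹ = 1 := by
  simpa [PresentedGroup.of] using congrArg f (PresentedGroup.one_of_mem (rels := relStmt1) rfl)

theorem commute_of_relStmt1 {G : Type*} [Group G]
    (hb : ∀ a b c : G, ⁅a, b⁆ = 1 → b = c * a * c⁻¹ → a = b) {a b : G}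
    (hrel : a ^ 2 * b⁻¹ * a⁻¹ * b ^ 2 * a⁻¹ * b⁻¹ = 1) : Commute a b := by
  set x := a * b⁻¹
  have hcomm : ⁅x, a * x * a⁻¹⁆ = 1 := by
    have : ⁅x, a * x * a⁻¹⁆ = x * (a ^ 2 * b⁻¹ * a⁻¹ * b ^ 2 * a⁻¹ * b⁻¹) * x⁻¹ := by
      simp only [x, commutatorElement_def, pow_two]; group
    rw [this, hrel, mul_one, mul_inv_cancel]
  have hx : x = a * x * a⁻¹ := hb x _ a hcomm rfl
  have : Commute a b⁻¹ := by
    rw [eq_mul_inv_iff_mul_eq] at hx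
    exact mul_left_cancel (hx.symm.trans (mul_assoc _ _ _))
  simpa using this.inv_right

theorem stmt1_general (G : Type*) [Group G]
    (hb : ∀ a b c : G, ⁅a, b⁆ = 1 → b = c * a * c⁻¹ → a = b)
    (φ : PresentedGroup relStmt1 ≃* G) :
    ∀ x y : G, x * y = y * x := by
  have hab := commute_of_relStmt1 hb (relStmt1_map_of φ.toMonoidHom)
  refine Subgroup.mul_comm_of_closure_eq_top
    (PresentedGroup.closure_range_comp_of (f := φ.toMonoidHom) φ.surjective) ?_
  rintro _ ⟨i, rfl⟩ _ ⟨j, rfl⟩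
  cases i <;> cases j
  · rfl
  · exact hab.eq.symm
  · exact hab.eq
  · rfl

/-- let `G` be a group in which (a) `⁅a^p, b^q⁆ = 1` for nonzero integers
`p, q` implies `⁅a, b⁆ = 1`, and (b) `⁅a, b⁆ = 1` and `b = c * a * c⁻¹` imply `a = b`.
If `G` has a presentation `⟨a, b ∣ a² b⁻¹ a⁻¹ b² a⁻¹ b⁻¹ = 1⟩`, then `G` is abelian. -/
theorem stmt1 (G : Type*) [Group G]
    (ha : ∀ a b : G, ∀ p q : ℤ, p ≠ 0 → q ≠ 0 → ⁅a ^ p, b ^ q⁆ = 1 → ⁅a, b⁆ = 1)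
    (hb : ∀ a b c : G, ⁅a, b⁆ = 1 → b = c * a * c⁻¹ → a = b)
    (φ : PresentedGroup relStmt1 ≃* G) :
    ∀ x y : G, x * y = y * x :=
  stmt1_general G hb φ
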